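/- Let μ be a fuzzy set of an MTL-algebra L. Then μ is an (∈̄,∈̄∨q̄)-fuzzy MV-filter of L if and only if for every t ∈ (0.5, 1] the ∈-level set F(t) = {x ∈ L : μ(x) ≥ t} is either empty or an MV-filter of L. -/

import Mathlib

/-! Each defining inequality `b ≤ max a (1/2)` of an (∈̄,∈̄∨q̄)-fuzzy MV-filter says that every
level `t ∈ (1/2, 1]` reached by `b` is reached by `a`, which is the matching closure property
(`1 ∈ F(t)`, modus ponens, the MV-condition) of the level set `F(t)`. -/

/-- An MTL-algebra: a bounded lattice with `⊥ ≠ ⊤`, a product `odot` and residuum `rimp`,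
where `odot` is associative, commutative and monotone in each argument, `⊤` is a unit,
the Galois correspondence holds and prelinearity holds. -/
class MTL (L : Type*) extends Lattice L, BoundedOrder L where
  odot : L → L → L
  rimp : L → L → L
  bot_ne_top : (⊥ : L) ≠ ⊤
  odot_assoc : ∀ x y z : L, odot (odot x y) z = odot x (odot y z)
  odot_comm : ∀ x y : L, odot x y = odot y x
  odot_mono_left : ∀ x y z : L, x ≤ y → odot x z ≤ odot y z
  odot_mono_right : ∀ x y z : L, x ≤ y → odot z x ≤ odot z y
  odot_top : ∀ x : L, odot x ⊤ = x
  galois : ∀ x y z : L, odot x y ≤ z ↔ x ≤ rimp y z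
  prelinear : ∀ x y : L, rimp x y ⊔ rimp y x = ⊤

open MTL

variable {L : Type*} [MTL L]

/-- A subset `A` is a filter: `1 ∈ A` and it is closed under modus ponens. -/
def IsFilter' (A : Set L) : Prop :=
  (⊤ : L) ∈ A ∧ ∀ x y : L, x ∈ A → rimp x y ∈ A → y ∈ A

/-- An (∈̄,∈̄∨q̄)-fuzzy filter: `max(μ(1), 0.5) ≥ μ(x)` and
`max(μ(y), 0.5) ≥ min(μ(x → y), μ(x))`. -/
def IsBarFuzzyFilter (μ : L → ℝ) : Prop :=
  (∀ x : L, max (μ ⊤) (1/2) ≥ μ x) ∧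
    ∀ x y : L, max (μ y) (1/2) ≥ min (μ (rimp x y)) (μ x)

/-- An MV-filter: a filter such that `x → y ∈ A` implies `((y → x) → x) → y ∈ A`. -/
def IsMVFilter (A : Set L) : Prop :=
  IsFilter' A ∧ ∀ x y : L, rimp x y ∈ A → rimp (rimp (rimp y x) x) y ∈ A

/-- An (∈̄,∈̄∨q̄)-fuzzy MV-filter: `max(μ(((y → x) → x) → y), 0.5) ≥ μ(x → y)`. -/
def IsBarFuzzyMVFilter (μ : L → ℝ) : Prop :=
  IsBarFuzzyFilter μ ∧
    ∀ x y : L, max (μ (rimp (rimp (rimp y x) x) y)) (1/2) ≥ μ (rimp x y)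

lemma le_max_half_of_forall {a b : ℝ} (hb : b ≤ 1)
    (h : ∀ t : ℝ, 1/2 < t → t ≤ 1 → t ≤ b → t ≤ a) : b ≤ max a (1/2) := by
  by_contra! hlt
  exact hlt.not_ge (le_max_of_le_left (h b ((le_max_right _ _).trans_lt hlt) hb le_rfl))

lemma le_of_le_max_half {a t : ℝ} (h : t ≤ max a (1/2)) (ht : 1/2 < t) : t ≤ a :=
  (le_max_iff.1 h).resolve_right ht.not_ge

section

variable {μ : L → ℝ} {t : ℝ}

lemma IsBarFuzzyMVFilter.isMVFilter_levelSet (hμ : IsBarFuzzyMVFilter μ) (ht : 1/2 < t)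
    (hne : {x : L | t ≤ μ x}.Nonempty) : IsMVFilter {x : L | t ≤ μ x} := by
  obtain ⟨⟨htop, hmp⟩, hmv⟩ := hμ
  obtain ⟨a, ha⟩ := hne
  refine ⟨⟨?_, fun x y hx hxy => ?_⟩, fun x y hxy => ?_⟩
  · exact le_of_le_max_half (ha.trans (htop a)) ht
  · exact le_of_le_max_half ((le_min hxy hx).trans (hmp x y)) ht
  · exact le_of_le_max_half (hxy.trans (hmv x y)) ht

lemma isBarFuzzyMVFilter_of_isMVFilter_levelSet (hμ1 : ∀ x, μ x ≤ 1)
    (h : ∀ t : ℝ, 1/2 < t → t ≤ 1 → {x : L | t ≤ μ x}.Nonempty → IsMVFilter {x : L | t ≤ μ x}) :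
    IsBarFuzzyMVFilter μ := by
  refine ⟨⟨fun x => ?_, fun x y => ?_⟩, fun x y => ?_⟩
  · refine le_max_half_of_forall (hμ1 x) fun t ht ht1 htx => ?_
    exact (h t ht ht1 ⟨x, htx⟩).1.1
  · refine le_max_half_of_forall ((min_le_right _ _).trans (hμ1 x)) fun t ht ht1 htxy => ?_
    obtain ⟨hxy, hx⟩ := le_min_iff.1 htxy
    exact (h t ht ht1 ⟨x, hx⟩).1.2 x y hx hxy
  · refine le_max_half_of_forall (hμ1 _) fun t ht ht1 htxy => ?_
    exact (h t ht ht1 ⟨_, htxy⟩).2 x y htxy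

end

theorem stmt_16_general (μ : L → ℝ) (hμ1 : ∀ x : L, μ x ≤ 1) :
    IsBarFuzzyMVFilter μ ↔ (∀ t : ℝ, 1/2 < t → t ≤ 1 → ({x : L | t ≤ μ x} = ∅ ∨ IsMVFilter {x : L | t ≤ μ x})) := by
  refine ⟨fun hμ t ht _ => ?_, fun h => ?_⟩
  · exact (Set.eq_empty_or_nonempty _).imp_right (hμ.isMVFilter_levelSet ht)
  · exact isBarFuzzyMVFilter_of_isMVFilter_levelSet hμ1 fun t ht ht1 hne =>
      (h t ht ht1).resolve_left hne.ne_empty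

theorem stmt_16 (μ : L → ℝ) (hμ0 : ∀ x : L, 0 ≤ μ x) (hμ1 : ∀ x : L, μ x ≤ 1) :
    IsBarFuzzyMVFilter μ ↔ (∀ t : ℝ, 1/2 < t → t ≤ 1 → ({x : L | t ≤ μ x} = ∅ ∨ IsMVFilter {x : L | t ≤ μ x})) :=
  stmt_16_general μ hμ1
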